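/- Let (T₁, …, Tₙ), n ≥ 2, be a 𝒰ₙ-twisted isometry on H. Then the operators {I - T_i T_i* : 1 ≤ i ≤ n} form a family of pairwise commuting orthogonal projections, and consequently for any subset Λ ⊆ {1,…,n}, the range of ∏_{i ∈ Λ}(I - T_iT_i*) equals ⋂_{i ∈ Λ} ker(T_i*). -/

import Mathlib

/-!
Write `P i = T i (T i)*` for the range projection of the isometry `T i`. The twisted relations give
`P i P j = (T j T i)(T j T i)*`, which is self-adjoint; since `P i` and `P j` are self-adjoint
this forces them, and hence the defect projections `I - P i`, to commute. For commuting
idempotents the range of the product is the intersection of the ranges, and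
`range (I - P i) = ker P i = ker (T i)*` because `T i` is injective.
-/

open ContinuousLinearMap

/-- The defect projection `I - T T*` of an isometry `T`. -/
noncomputable def defectProj {H : Type*} [NormedAddCommGroup H] [InnerProductSpace ℂ H]
    [CompleteSpace H] (T : H →L[ℂ] H) : H →L[ℂ] H :=
  1 - T ∘L adjoint T

section Monoid

variable {ι M : Type*} [Monoid M]

theorem Finset.commute_noncommProd_of_notMem [DecidableEq ι] {s : Finset ι} {a : ι} (ha : a ∉ s)
    (f : ι → M)
    (comm : (↑(insert a s) : Set ι).Pairwise fun i j => Commute (f i) (f j))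
    (hs : (s : Set ι).Pairwise fun i j => Commute (f i) (f j)) :
    Commute (f a) (s.noncommProd f hs) :=
  s.noncommProd_commute f hs _ fun _ hi =>
    comm (s.mem_insert_self a) (Finset.mem_insert_of_mem hi) fun h => ha (h ▸ hi)

theorem IsIdempotentElem.noncommProd (s : Finset ι) (p : ι → M)
    (comm : (s : Set ι).Pairwise fun i j => Commute (p i) (p j))
    (hp : ∀ i ∈ s, IsIdempotentElem (p i)) :
    IsIdempotentElem (s.noncommProd p comm) := by
  classical
  induction s using Finset.induction_on with
  | empty => exact .one
  | insert a s ha ih =>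
    rw [Finset.noncommProd_insert_of_notMem _ _ _ _ ha]
    exact (hp a (s.mem_insert_self a)).mul_of_commute
      (Finset.commute_noncommProd_of_notMem ha p comm _)
      (ih _ fun i hi => hp i (Finset.mem_insert_of_mem hi))

end Monoid

section StarMonoid

variable {R : Type*} [Monoid R] [StarMul R]

theorem mul_star_mul_mul_star_of_twisted {s t u : R} (hu : star u * u = 1)
    (hst : s * t = u * (t * s)) (hst' : star s * t = star u * (t * star s))
    (hsu : s * star u = star u * s) :
    s * star s * (t * star t) = t * s * star (t * s) := by
  calc s * star s * (t * star t) = s * (star s * t) * star t := by simp only [mul_assoc]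
    _ = s * star u * (t * star s) * star t := by rw [hst']; simp only [mul_assoc]
    _ = star u * (s * t) * (star s * star t) := by rw [hsu]; simp only [mul_assoc]
    _ = star u * u * (t * s) * (star s * star t) := by rw [hst]; simp only [mul_assoc]
    _ = t * s * star (t * s) := by rw [hu, one_mul, star_mul]

theorem commute_mul_star_of_twisted {s t u : R} (hu : star u * u = 1)
    (hst : s * t = u * (t * s)) (hst' : star s * t = star u * (t * star s))
    (hsu : s * star u = star u * s) :
    Commute (s * star s) (t * star t) := by
  rw [IsSelfAdjoint.commute_iff (.mul_star_self s) (.mul_star_self t),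
    mul_star_mul_mul_star_of_twisted hu hst hst' hsu]
  exact .mul_star_self _

theorem isStarProjection_mul_star_of_star_mul_self {t : R} (ht : star t * t = 1) :
    IsStarProjection (t * star t) where
  isIdempotentElem := by rw [IsIdempotentElem, mul_assoc, ← mul_assoc (star t), ht, one_mul]
  isSelfAdjoint := .mul_star_self t

end StarMonoid

namespace LinearMap

variable {R M : Type*} [Semiring R] [AddCommMonoid M] [Module R M]

theorem range_mul_of_commute {p q : Module.End R M} (hp : IsIdempotentElem p)
    (hq : IsIdempotentElem q) (hpq : Commute p q) :
    range (p * q) = range p ⊓ range q := by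
  ext x
  rw [IsIdempotentElem.mem_range_iff (hp.mul_of_commute hpq hq), Submodule.mem_inf,
    IsIdempotentElem.mem_range_iff hp, IsIdempotentElem.mem_range_iff hq, Module.End.mul_apply]
  refine ⟨fun h => ⟨?_, ?_⟩, fun ⟨hpx, hqx⟩ => by rw [hqx, hpx]⟩
  · rw [← h, ← Module.End.mul_apply, hp.eq]
  · have hqpq : q * (p * q) = p * q := by rw [← mul_assoc, ← hpq.eq, mul_assoc, hq.eq]
    simpa only [Module.End.mul_apply, h] using LinearMap.congr_fun hqpq x

theorem range_noncommProd_of_isIdempotentElem {ι : Type*} (s : Finset ι)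
    (p : ι → Module.End R M) (comm : (s : Set ι).Pairwise fun i j => Commute (p i) (p j))
    (hp : ∀ i ∈ s, IsIdempotentElem (p i)) :
    range (s.noncommProd p comm) = ⨅ i ∈ s, range (p i) := by
  classical
  induction s using Finset.induction_on with
  | empty => simp [Module.End.one_eq_id]
  | insert a s ha ih =>
    have hs := fun i hi => hp i (Finset.mem_insert_of_mem hi)
    rw [Finset.noncommProd_insert_of_notMem _ _ _ _ ha,
      range_mul_of_commute (hp a (s.mem_insert_self a)) (.noncommProd _ _ _ hs)
        (Finset.commute_noncommProd_of_notMem ha p comm _),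
      ih _ hs, Finset.iInf_insert]

end LinearMap

section Isometry

variable {H : Type*} [NormedAddCommGroup H] [InnerProductSpace ℂ H] [CompleteSpace H]

theorem isStarProjection_defectProj {T : H →L[ℂ] H} (hT : adjoint T ∘L T = 1) :
    IsStarProjection (defectProj T) :=
  (isStarProjection_mul_star_of_star_mul_self hT).one_sub

theorem range_defectProj {T : H →L[ℂ] H} (hT : adjoint T ∘L T = 1) :
    LinearMap.range (defectProj T : H →ₗ[ℂ] H) = LinearMap.ker (adjoint T : H →ₗ[ℂ] H) := by
  have hinj : LinearMap.ker (T : H →ₗ[ℂ] H) = ⊥ :=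
    LinearMap.ker_eq_bot.mpr <|
      Function.LeftInverse.injective (g := adjoint T) fun x => congr($hT x)
  rw [← LinearMap.ker_comp_of_ker_eq_bot _ hinj]
  exact (LinearMap.IsIdempotentElem.ker_eq_range_one_sub
    (isStarProjection_mul_star_of_star_mul_self hT).isIdempotentElem.toLinearMap).symm

theorem commute_defectProj_of_twisted {S T U : H →L[ℂ] H} (hU : adjoint U ∘L U = 1)
    (hST : S ∘L T = U ∘L (T ∘L S)) (hST' : adjoint S ∘L T = adjoint U ∘L (T ∘L adjoint S))
    (hSU : S ∘L adjoint U = adjoint U ∘L S) :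
    Commute (defectProj S) (defectProj T) :=
  (Commute.one_left _).sub_left <| (Commute.one_right _).sub_right <|
    commute_mul_star_of_twisted hU hST hST' hSU

theorem range_noncommProd_defectProj {ι : Type*} (s : Finset ι) (T : ι → H →L[ℂ] H)
    (hT : ∀ i ∈ s, adjoint (T i) ∘L T i = 1)
    (comm : (s : Set ι).Pairwise fun i j => Commute (defectProj (T i)) (defectProj (T j))) :
    LinearMap.range ((s.noncommProd (fun i => defectProj (T i)) comm : H →L[ℂ] H) : H →ₗ[ℂ] H)
      = ⨅ i ∈ s, LinearMap.ker (adjoint (T i) : H →ₗ[ℂ] H) := by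
  change LinearMap.range (toLinearMapRingHom _) = _
  rw [Finset.map_noncommProd]
  refine (LinearMap.range_noncommProd_of_isIdempotentElem _ _ _ fun i hi => ?_).trans
    (biInf_congr fun i hi => range_defectProj (hT i hi))
  exact (isStarProjection_defectProj (hT i hi)).isIdempotentElem.toLinearMap

end Isometry

theorem stmt18_general {H : Type*} [NormedAddCommGroup H] [InnerProductSpace ℂ H] [CompleteSpace H]
    (n : ℕ) (T : Fin n → (H →L[ℂ] H)) (U : Fin n → Fin n → (H →L[ℂ] H))
    (hUunit : ∀ i j, i ≠ j → adjoint (U i j) ∘L U i j = 1 ∧ U i j ∘L adjoint (U i j) = 1)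
    (hUadj : ∀ i j, i ≠ j → U j i = adjoint (U i j))
    (hTiso : ∀ i, adjoint (T i) ∘L T i = 1)
    (htw1 : ∀ i j, i ≠ j → T i ∘L T j = U i j ∘L (T j ∘L T i))
    (htw2 : ∀ i j, i ≠ j → adjoint (T i) ∘L T j = adjoint (U i j) ∘L (T j ∘L adjoint (T i)))
    (htw3 : ∀ k i j, i ≠ j → T k ∘L U i j = U i j ∘L T k) :
    (∀ i j, Commute (defectProj (T i)) (defectProj (T j))) ∧
    (∀ i, IsSelfAdjoint (defectProj (T i)) ∧
      defectProj (T i) ∘L defectProj (T i) = defectProj (T i)) ∧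
    ∀ Λ : Finset (Fin n),
      ∀ hc : (Λ : Set (Fin n)).Pairwise fun i j => Commute (defectProj (T i)) (defectProj (T j)),
        LinearMap.range ((Λ.noncommProd (fun i => defectProj (T i)) hc : H →L[ℂ] H) : H →ₗ[ℂ] H)
          = ⨅ i ∈ Λ, LinearMap.ker (adjoint (T i) : H →ₗ[ℂ] H) := by
  have hcomm : ∀ i j, Commute (defectProj (T i)) (defectProj (T j)) := by
    intro i j
    rcases eq_or_ne i j with rfl | hij
    · exact .refl _
    refine commute_defectProj_of_twisted (hUunit i j hij).1 (htw1 i j hij) (htw2 i j hij) ?_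
    simpa only [hUadj i j hij] using htw3 i j i hij.symm
  refine ⟨hcomm, fun i => ?_, fun Λ hc =>
    range_noncommProd_defectProj Λ T (fun i _ => hTiso i) hc⟩
  exact ⟨(isStarProjection_defectProj (hTiso i)).isSelfAdjoint,
    (isStarProjection_defectProj (hTiso i)).isIdempotentElem⟩

theorem stmt18 {H : Type*} [NormedAddCommGroup H] [InnerProductSpace ℂ H] [CompleteSpace H]
    (n : ℕ) (hn : 2 ≤ n) (T : Fin n → (H →L[ℂ] H)) (U : Fin n → Fin n → (H →L[ℂ] H))
    (hUunit : ∀ i j, i ≠ j → adjoint (U i j) ∘L U i j = 1 ∧ U i j ∘L adjoint (U i j) = 1)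
    (hUadj : ∀ i j, i ≠ j → U j i = adjoint (U i j))
    (hUcomm : ∀ i j k l, Commute (U i j) (U k l))
    (hTiso : ∀ i, adjoint (T i) ∘L T i = 1)
    (htw1 : ∀ i j, i ≠ j → T i ∘L T j = U i j ∘L (T j ∘L T i))
    (htw2 : ∀ i j, i ≠ j → adjoint (T i) ∘L T j = adjoint (U i j) ∘L (T j ∘L adjoint (T i)))
    (htw3 : ∀ k i j, i ≠ j → T k ∘L U i j = U i j ∘L T k) :
    (∀ i j, Commute (defectProj (T i)) (defectProj (T j))) ∧
    (∀ i, IsSelfAdjoint (defectProj (T i)) ∧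
      defectProj (T i) ∘L defectProj (T i) = defectProj (T i)) ∧
    ∀ Λ : Finset (Fin n),
      ∀ hc : (Λ : Set (Fin n)).Pairwise fun i j => Commute (defectProj (T i)) (defectProj (T j)),
        LinearMap.range ((Λ.noncommProd (fun i => defectProj (T i)) hc : H →L[ℂ] H) : H →ₗ[ℂ] H)
          = ⨅ i ∈ Λ, LinearMap.ker (adjoint (T i) : H →ₗ[ℂ] H) :=
  stmt18_general n T U hUunit hUadj hTiso htw1 htw2 htw3
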